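/- Consider the branching process with offspring distribution X = min(Y, ξ) where Y is geometric with P(Y=i)=(1-p)p^i independent of ξ (the (p,ξ)-MAE model), started from one individual. The survival probability θ₂(p,ξ) is positive if and only if Σ_{x≥1} x p^x P(ξ ≥ x) > (1 - p·E(ξ p^ξ))/(1-p). -/

import Mathlib

open scoped ENNReal

/-- Binomial thinning of a nonnegative-integer-valued distribution `ξ` with retention
probability `p`: given `ξ = n`, the result is `Binomial(n, p)`. -/
noncomputable def binThin (p : ℝ≥0∞) (hp : p ≤ 1) (ξ : PMF ℕ) : PMF ℕ :=
  ξ.bind fun n => (PMF.binomial p.toNNReal (by simpa using ENNReal.toNNReal_mono ENNReal.one_ne_top hp) n).map Fin.val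

/-- Mean of a `PMF` on `ℕ`. -/
noncomputable def pmfMean (μ : PMF ℕ) : ℝ≥0∞ := ∑' k : ℕ, (k : ℝ≥0∞) * μ k

/-- Tail probability `P(μ ≥ k)`. -/
noncomputable def pmfTail (μ : PMF ℕ) (k : ℕ) : ℝ≥0∞ := ∑' n : ℕ, if k ≤ n then μ n else 0

/-- Probability generating function of a `PMF` on `ℕ`. -/
noncomputable def pmfPgf (μ : PMF ℕ) (s : ℝ) : ℝ := ∑' k : ℕ, (μ k).toReal * s ^ k

/-- Distribution of the sum of `n` i.i.d. copies of `μ`. -/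
noncomputable def iidSum (μ : PMF ℕ) : ℕ → PMF ℕ
  | 0 => PMF.pure 0
  | n + 1 => (iidSum μ n).bind fun t => μ.map (t + ·)

/-- Distribution of the `n`-th generation of a Galton–Watson branching process with
offspring distribution `μ`, started from a single individual. -/
noncomputable def gwGen (μ : PMF ℕ) : ℕ → PMF ℕ
  | 0 => PMF.pure 1
  | n + 1 => (gwGen μ n).bind (iidSum μ)

/-- Extinction probability `P(⋃ₙ {Zₙ = 0})` of the Galton-Watson process:
the events `{Zₙ = 0}` are increasing, so this is `⨆ n, P(Zₙ = 0)`. -/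
noncomputable def extinctionProb (μ : PMF ℕ) : ℝ≥0∞ := ⨆ n, gwGen μ n 0

/-- Survival (non-extinction) probability of the Galton-Watson process. -/
noncomputable def survivalProb (μ : PMF ℕ) : ℝ≥0∞ := 1 - extinctionProb μ

/-- Expected total progeny `E(Σₙ Zₙ)` of the Galton-Watson process (by Tonelli this is
the sum of the means of the generation sizes). -/
noncomputable def progenyMean (μ : PMF ℕ) : ℝ≥0∞ := ∑' n : ℕ, pmfMean (gwGen μ n)

/-- The Riemann zeta function `ζ(γ) = Σ_{j ≥ 1} j^{-γ}` as a real series. -/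
noncomputable def zetaSum (γ : ℝ) : ℝ := ∑' n : ℕ, ((n : ℝ) + 1) ^ (-γ)

/-- The polylogarithm `Li_a(x) = Σ_{j ≥ 1} x^j / j^a`. -/
noncomputable def polylog (a x : ℝ) : ℝ := ∑' n : ℕ, x ^ (n + 1) / ((n : ℝ) + 1) ^ a

/-!
Write `f` for the generating function of the offspring law. Then `P(Zₙ = 0) = f^[n] 0`, so the
extinction probability is the supremum of the Kleene iterates of `f` on `[0, ∞]`: a fixed point
of `f` lying below every `q` with `f q ≤ q`. If the mean `m` exceeds `1`, then `f s < s` for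
some `s < 1`; if `m ≤ 1` and the law is not carried by `{0, 1}`, then `f s > s` on `[0, 1)`.
Hence survival has positive probability iff `m > 1`.

For `X = min(Y, ξ)` with `P(Y ≥ k) = pᵏ`, `E X = Σₙ P(ξ = n) Σ_{k<n} pᵏ⁺¹`, and the identity
`Σ_{k<n} pᵏ⁺¹ = (1 - p) Σ_{x≤n} x pˣ + p · n pⁿ`, summed against the law of `ξ`, gives
`E X = (1 - p) Σₓ x pˣ P(ξ ≥ x) + p E(ξ p^ξ)`.
-/

open Finset

namespace PMF

lemma tsum_map_apply_mul (ν : PMF ℕ) (g : ℕ → ℕ) (h : ℕ → ℝ≥0∞) :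
    ∑' j, ν.map g j * h j = ∑' y, ν y * h (g y) := by
  simp_rw [map_apply, ← ENNReal.tsum_mul_right]
  rw [ENNReal.tsum_comm]
  refine tsum_congr fun y => ?_
  rw [tsum_eq_single (g y) fun j hj => by simp [hj]]
  simp

lemma tsum_bind_apply_mul (ν : PMF ℕ) (κ : ℕ → PMF ℕ) (h : ℕ → ℝ≥0∞) :
    ∑' j, ν.bind κ j * h j = ∑' n, ν n * ∑' j, κ n j * h j := by
  simp_rw [bind_apply, ← ENNReal.tsum_mul_right, ← ENNReal.tsum_mul_left, mul_assoc]
  exact ENNReal.tsum_comm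

end PMF

noncomputable def ennPgf (μ : PMF ℕ) (s : ℝ≥0∞) : ℝ≥0∞ := ∑' k, μ k * s ^ k

lemma ennPgf_zero (μ : PMF ℕ) : ennPgf μ 0 = μ 0 := by
  rw [ennPgf, tsum_eq_single 0 fun k hk => by simp [hk]]
  simp

lemma ennPgf_mono (μ : PMF ℕ) : Monotone (ennPgf μ) :=
  fun _ _ hst => ENNReal.tsum_le_tsum fun k => by gcongr

lemma ennPgf_iSup (μ : PMF ℕ) {c : ℕ → ℝ≥0∞} (hc : Monotone c) :
    ennPgf μ (⨆ n, c n) = ⨆ n, ennPgf μ (c n) := by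
  simp_rw [ennPgf, ENNReal.iSup_pow, ENNReal.mul_iSup, ENNReal.tsum_eq_iSup_nat]
  rw [iSup_comm]
  congr 1; ext N
  exact ENNReal.finsetSum_iSup_of_monotone fun k _ _ hmn => by gcongr; exact hc hmn

lemma ennPgf_bind (ν : PMF ℕ) (κ : ℕ → PMF ℕ) (s : ℝ≥0∞) :
    ennPgf (ν.bind κ) s = ∑' n, ν n * ennPgf (κ n) s :=
  PMF.tsum_bind_apply_mul ν κ _

lemma ennPgf_map_add (μ : PMF ℕ) (t : ℕ) (s : ℝ≥0∞) :
    ennPgf (μ.map (t + ·)) s = s ^ t * ennPgf μ s := by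
  rw [ennPgf, PMF.tsum_map_apply_mul, ennPgf, ← ENNReal.tsum_mul_left]
  exact tsum_congr fun k => by ring

lemma ennPgf_iidSum (μ : PMF ℕ) (k : ℕ) (s : ℝ≥0∞) :
    ennPgf (iidSum μ k) s = ennPgf μ s ^ k := by
  induction k with
  | zero => simp [iidSum, ennPgf, PMF.pure_apply]
  | succ k ih =>
    simp_rw [iidSum, ennPgf_bind, ennPgf_map_add, ← mul_assoc, ENNReal.tsum_mul_right]
    rw [← ennPgf, ih, pow_succ]

lemma ennPgf_gwGen (μ : PMF ℕ) (n : ℕ) : ennPgf (gwGen μ n) = (ennPgf μ)^[n] := by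
  induction n with
  | zero => ext s; simp [gwGen, ennPgf, PMF.pure_apply]
  | succ n ih =>
    ext s
    simp_rw [gwGen, ennPgf_bind, ennPgf_iidSum]
    rw [← ennPgf, ih, Function.iterate_succ_apply]

lemma extinctionProb_eq_iSup_iterate (μ : PMF ℕ) :
    extinctionProb μ = ⨆ n, (ennPgf μ)^[n] 0 := by
  simp_rw [extinctionProb, ← ennPgf_zero, ennPgf_gwGen]

lemma monotone_iterate_ennPgf_zero (μ : PMF ℕ) : Monotone fun n => (ennPgf μ)^[n] 0 :=
  (ennPgf_mono μ).monotone_iterate_of_le_map zero_le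

lemma ennPgf_extinctionProb (μ : PMF ℕ) : ennPgf μ (extinctionProb μ) = extinctionProb μ := by
  rw [extinctionProb_eq_iSup_iterate, ennPgf_iSup μ (monotone_iterate_ennPgf_zero μ)]
  refine le_antisymm (iSup_le fun n => ?_) (iSup_le fun n => ?_)
  · rw [← Function.iterate_succ_apply' (ennPgf μ)]
    exact le_iSup (fun n => (ennPgf μ)^[n] 0) (n + 1)
  · refine le_iSup_of_le n ?_
    rw [← Function.iterate_succ_apply' (ennPgf μ)]
    exact monotone_iterate_ennPgf_zero μ n.le_succ

lemma extinctionProb_le_of_ennPgf_le (μ : PMF ℕ) {q : ℝ≥0∞} (hq : ennPgf μ q ≤ q) :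
    extinctionProb μ ≤ q := by
  rw [extinctionProb_eq_iSup_iterate]
  refine iSup_le fun n => ?_
  induction n with
  | zero => exact zero_le
  | succ n ih =>
    rw [Function.iterate_succ_apply']
    exact (ennPgf_mono μ ih).trans hq

lemma summable_toReal_mul_pow (μ : PMF ℕ) {s : ℝ} (hs0 : 0 ≤ s) (hs1 : s ≤ 1) :
    Summable fun k => (μ k).toReal * s ^ k :=
  (ENNReal.summable_toReal μ.tsum_coe_ne_top).of_nonneg_of_le (fun k => by positivity)
    fun k => mul_le_of_le_one_right ENNReal.toReal_nonneg (pow_le_one₀ hs0 hs1)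

lemma summable_toReal_mul_one_sub_pow (μ : PMF ℕ) {s : ℝ} (hs0 : 0 ≤ s) (hs1 : s ≤ 1) :
    Summable fun k => (μ k).toReal * (1 - s ^ k) := by
  simpa [mul_one_sub] using (ENNReal.summable_toReal μ.tsum_coe_ne_top).sub
    (summable_toReal_mul_pow μ hs0 hs1)

lemma ennPgf_ofReal (μ : PMF ℕ) {s : ℝ} (hs0 : 0 ≤ s) (hs1 : s ≤ 1) :
    ennPgf μ (ENNReal.ofReal s) = ENNReal.ofReal (pmfPgf μ s) := by
  rw [pmfPgf, ENNReal.ofReal_tsum_of_nonneg (fun k => by positivity)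
    (summable_toReal_mul_pow μ hs0 hs1)]
  refine tsum_congr fun k => ?_
  rw [ENNReal.ofReal_mul ENNReal.toReal_nonneg, ENNReal.ofReal_toReal (μ.apply_ne_top k),
    ENNReal.ofReal_pow hs0]

lemma pmfPgf_nonneg (μ : PMF ℕ) {s : ℝ} (hs : 0 ≤ s) : 0 ≤ pmfPgf μ s :=
  tsum_nonneg fun k => by positivity

lemma one_sub_pmfPgf (μ : PMF ℕ) {s : ℝ} (hs0 : 0 ≤ s) (hs1 : s ≤ 1) :
    1 - pmfPgf μ s = ∑' k, (μ k).toReal * (1 - s ^ k) := by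
  have htotal : ∑' k, (μ k).toReal = 1 := by
    rw [← ENNReal.tsum_toReal_eq μ.apply_ne_top, μ.tsum_coe, ENNReal.toReal_one]
  simp_rw [mul_one_sub]
  rw [(ENNReal.summable_toReal μ.tsum_coe_ne_top).tsum_sub (summable_toReal_mul_pow μ hs0 hs1),
    htotal, pmfPgf]

lemma exists_pmfPgf_lt_self (μ : PMF ℕ) (hm : 1 < pmfMean μ) :
    ∃ s, 0 ≤ s ∧ s < 1 ∧ pmfPgf μ s < s := by
  obtain ⟨N, hN⟩ : ∃ N, 1 < ∑ k ∈ range N, (k : ℝ≥0∞) * μ k := by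
    rwa [pmfMean, ENNReal.tsum_eq_iSup_nat, lt_iSup_iff] at hm
  -- `1 - f s ≥ (1 - s) φ s` on `[0, 1]`, with `φ` a polynomial and `φ 1 = Σ_{k<N} k μ k > 1`
  set φ : ℝ → ℝ := fun s => ∑ k ∈ range N, (μ k).toReal * ∑ j ∈ range k, s ^ j
  have hφ1 : 1 < φ 1 := by
    rw [← ENNReal.toReal_lt_toReal ENNReal.one_ne_top
      (ENNReal.sum_ne_top.2 fun k _ => ENNReal.mul_ne_top (by simp) (μ.apply_ne_top k)),
      ENNReal.toReal_sum fun k _ => ENNReal.mul_ne_top (by simp) (μ.apply_ne_top k)] at hN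
    simpa [φ, mul_comm] using hN
  have hφc : Continuous φ := by fun_prop
  obtain ⟨s, hφs, hs⟩ := (((hφc.tendsto 1).eventually (lt_mem_nhds hφ1)).filter_mono
    nhdsWithin_le_nhds |>.and (Ioo_mem_nhdsLT zero_lt_one)).exists
  refine ⟨s, hs.1.le, hs.2, ?_⟩
  have hφ : (1 - s) * φ s ≤ 1 - pmfPgf μ s := by
    rw [one_sub_pmfPgf μ hs.1.le hs.2.le, mul_sum]
    refine (sum_congr rfl fun k _ => ?_).trans_le
      ((summable_toReal_mul_one_sub_pow μ hs.1.le hs.2.le).sum_le_tsum _ fun k _ => ?_)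
    · rw [← geom_sum_mul_neg]; ring
    · exact mul_nonneg ENNReal.toReal_nonneg (sub_nonneg.2 (pow_le_one₀ hs.1.le hs.2.le))
  nlinarith [hs.2]

lemma exists_two_le_apply_ne_zero (μ : PMF ℕ) (h01 : μ 0 + μ 1 < 1) : ∃ k, 2 ≤ k ∧ μ k ≠ 0 := by
  by_contra! h
  have := μ.tsum_coe
  rw [tsum_eq_sum (s := range 2) fun k hk => h k (by rw [mem_range] at hk; omega), sum_range_succ,
    sum_range_one] at this
  exact h01.ne this

lemma one_sub_pow_lt_mul {s : ℝ} (hs0 : 0 ≤ s) (hs1 : s < 1) {k : ℕ} (hk : 2 ≤ k) :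
    1 - s ^ k < k * (1 - s) := by
  obtain ⟨j, rfl⟩ := Nat.exists_eq_add_of_le' hk
  have := one_add_mul_sub_le_pow (by linarith : -1 ≤ s) (j + 1)
  push_cast at this ⊢
  rw [pow_succ]
  have hgap : 0 < (1 - s) * (1 - s) * (j + 1) := by
    have : 0 < 1 - s := by linarith
    positivity
  nlinarith [mul_le_mul_of_nonneg_right this hs0]

lemma lt_pmfPgf_self (μ : PMF ℕ) (h01 : μ 0 + μ 1 < 1) (hm : pmfMean μ ≤ 1) {s : ℝ}
    (hs0 : 0 ≤ s) (hs1 : s < 1) : s < pmfPgf μ s := by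
  obtain ⟨k₀, hk₀, hμk₀⟩ := exists_two_le_apply_ne_zero μ h01
  have hmfin : pmfMean μ ≠ ⊤ := ne_top_of_le_ne_top ENNReal.one_ne_top hm
  have hmean : HasSum (fun k => (μ k).toReal * k) (pmfMean μ).toReal := by
    rw [pmfMean, ENNReal.tsum_toReal_eq fun k => ENNReal.mul_ne_top (by simp) (μ.apply_ne_top k)]
    simpa [mul_comm] using (ENNReal.summable_toReal hmfin).hasSum
  have hmean_le : (pmfMean μ).toReal ≤ 1 := ENNReal.toReal_le_of_le_ofReal zero_le_one (by simpa)
  have : 1 - pmfPgf μ s < 1 - s := calc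
    1 - pmfPgf μ s = ∑' k, (μ k).toReal * (1 - s ^ k) := one_sub_pmfPgf μ hs0 hs1.le
    _ < ∑' k, (μ k).toReal * k * (1 - s) := by
      simp_rw [mul_assoc]
      refine Summable.tsum_lt_tsum (i := k₀)
        (fun k => mul_le_mul_of_nonneg_left ?_ ENNReal.toReal_nonneg)
        (mul_lt_mul_of_pos_left (one_sub_pow_lt_mul hs0 hs1 hk₀)
          (ENNReal.toReal_pos hμk₀ (μ.apply_ne_top k₀)))
        ?_ ?_
      · linarith [one_add_mul_sub_le_pow (by linarith : -1 ≤ s) k]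
      · exact summable_toReal_mul_one_sub_pow μ hs0 hs1.le
      · simpa only [← mul_assoc] using hmean.summable.mul_right (1 - s)
    _ = (pmfMean μ).toReal * (1 - s) := (hmean.mul_right _).tsum_eq
    _ ≤ 1 - s := mul_le_of_le_one_left (by linarith) hmean_le
  linarith

theorem survivalProb_pos_iff (μ : PMF ℕ) (h01 : μ 0 + μ 1 < 1) :
    0 < survivalProb μ ↔ 1 < pmfMean μ := by
  rw [survivalProb, tsub_pos_iff_lt]
  constructor
  · intro he
    by_contra! hm
    have hr1 : (extinctionProb μ).toReal < 1 := by
      simpa using (ENNReal.toReal_lt_toReal he.ne_top ENNReal.one_ne_top).2 he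
    have hfix := ennPgf_extinctionProb μ
    rw [← ENNReal.ofReal_toReal he.ne_top, ennPgf_ofReal μ ENNReal.toReal_nonneg hr1.le,
      ENNReal.ofReal_eq_ofReal_iff (pmfPgf_nonneg μ ENNReal.toReal_nonneg)
        ENNReal.toReal_nonneg] at hfix
    exact (lt_pmfPgf_self μ h01 hm ENNReal.toReal_nonneg hr1).ne' hfix
  · intro hm
    obtain ⟨s, hs0, hs1, hfs⟩ := exists_pmfPgf_lt_self μ hm
    refine (extinctionProb_le_of_ennPgf_le μ ?_).trans_lt (ENNReal.ofReal_lt_one.2 hs1)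
    rw [ennPgf_ofReal μ hs0 hs1.le]
    exact ENNReal.ofReal_le_ofReal hfs.le

lemma tsum_mul_pmfTail (μ : PMF ℕ) (w : ℕ → ℝ≥0∞) :
    ∑' k, w k * pmfTail μ k = ∑' n, μ n * ∑ k ∈ range (n + 1), w k := by
  simp_rw [pmfTail, ← ENNReal.tsum_mul_left]
  rw [ENNReal.tsum_comm]
  refine tsum_congr fun n => ?_
  rw [tsum_eq_sum (s := range (n + 1)) fun k hk => by
      simp [show ¬k ≤ n from fun h => hk (mem_range.2 (by omega))], mul_sum]
  refine sum_congr rfl fun k hk => ?_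
  simp [show k ≤ n by have := mem_range.1 hk; omega, mul_comm]

lemma tsum_mul_min (μ : PMF ℕ) (n : ℕ) :
    ∑' y, μ y * (min y n : ℕ) = ∑ k ∈ range n, pmfTail μ (k + 1) := by
  have hmin : ∀ y, ((min y n : ℕ) : ℝ≥0∞) = ∑ k ∈ range n, if k + 1 ≤ y then 1 else 0 := by
    intro y
    rw [sum_boole, show {k ∈ range n | k + 1 ≤ y} = range (min y n) by
      ext k; simp only [mem_filter, mem_range, lt_min_iff]; omega,
      card_range]
  simp_rw [hmin, mul_sum, pmfTail]
  rw [Summable.tsum_finsetSum fun _ _ => ENNReal.summable]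
  exact sum_congr rfl fun k _ => tsum_congr fun y => by split_ifs <;> simp

lemma pmfTail_le_one (μ : PMF ℕ) (k : ℕ) : pmfTail μ k ≤ 1 :=
  μ.tsum_coe ▸ ENNReal.tsum_le_tsum fun n => by split_ifs <;> simp

lemma pmfTail_eq_tsum_add (μ : PMF ℕ) (m : ℕ) : pmfTail μ m = ∑' j, μ (j + m) := by
  rw [pmfTail, ← (add_left_injective m).tsum_eq]
  · simp
  · intro n hn
    simp only [Function.mem_support, ne_eq, ite_eq_right_iff, Classical.not_imp] at hn
    exact ⟨n - m, Nat.sub_add_cancel hn.1⟩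

lemma pmfTail_of_geometric {p : ℝ} (hp0 : 0 ≤ p) (hp1 : p < 1) {Y : PMF ℕ}
    (hY : ∀ i : ℕ, Y i = ENNReal.ofReal ((1 - p) * p ^ i)) (m : ℕ) :
    pmfTail Y m = ENNReal.ofReal (p ^ m) := by
  have h : HasSum (fun j => (1 - p) * p ^ (j + m)) (p ^ m) := by
    have h1p : 1 - p ≠ 0 := by linarith
    simpa [pow_add, mul_comm, mul_left_comm, mul_assoc, h1p]
      using (hasSum_geometric_of_lt_one hp0 hp1).mul_left ((1 - p) * p ^ m)
  rw [pmfTail_eq_tsum_add]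
  simp_rw [hY]
  rw [← ENNReal.ofReal_tsum_of_nonneg (fun j => by nlinarith [pow_nonneg hp0 (j + m)])
    h.summable, h.tsum_eq]

lemma pmfMean_bind_map_min (ξ Y : PMF ℕ) :
    pmfMean (ξ.bind fun n => Y.map fun y => min y n)
      = ∑' n, ξ n * ∑ k ∈ range n, pmfTail Y (k + 1) := by
  simp_rw [pmfMean, mul_comm ((_ : ℕ) : ℝ≥0∞)]
  rw [PMF.tsum_bind_apply_mul]
  simp_rw [PMF.tsum_map_apply_mul, tsum_mul_min]

lemma pmfMean_bind_map_min_ne_top_of_geometric {p : ℝ} (hp0 : 0 ≤ p) (hp1 : p < 1)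
    (ξ : PMF ℕ) {Y : PMF ℕ} (hY : ∀ i : ℕ, Y i = ENNReal.ofReal ((1 - p) * p ^ i)) :
    pmfMean (ξ.bind fun n => Y.map fun y => min y n) ≠ ⊤ := by
  set r := ENNReal.ofReal p
  have hbound : ∀ n, ∑ k ∈ range n, pmfTail Y (k + 1) ≤ ∑' k, r ^ (k + 1) := fun n => by
    simp_rw [pmfTail_of_geometric hp0 hp1 hY, ENNReal.ofReal_pow hp0]
    exact ENNReal.sum_le_tsum _
  have hfin : ∑' k, r ^ (k + 1) ≠ ⊤ := by
    simp_rw [pow_succ', ENNReal.tsum_mul_left, ENNReal.tsum_geometric]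
    exact ENNReal.mul_ne_top ENNReal.ofReal_ne_top
      (ENNReal.inv_ne_top.2 (tsub_pos_of_lt (ENNReal.ofReal_lt_one.2 hp1)).ne')
  refine ne_top_of_le_ne_top hfin ?_
  calc pmfMean (ξ.bind fun n => Y.map fun y => min y n)
      ≤ ∑' n, ξ n * ∑' k, r ^ (k + 1) := by
        rw [pmfMean_bind_map_min]
        exact ENNReal.tsum_le_tsum fun n => by gcongr; exact hbound n
    _ = ∑' k, r ^ (k + 1) := by rw [ENNReal.tsum_mul_right, ξ.tsum_coe, one_mul]

lemma sum_range_pow_succ_eq (p : ℝ) (n : ℕ) :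
    ∑ k ∈ range n, p ^ (k + 1)
      = (1 - p) * ∑ x ∈ range (n + 1), (x : ℝ) * p ^ x + p * ((n : ℝ) * p ^ n) := by
  induction n with
  | zero => simp
  | succ n ih =>
    rw [sum_range_succ, ih, sum_range_succ _ (n + 1)]
    push_cast
    ring

lemma pmfMean_bind_map_min_of_geometric {p : ℝ} (hp0 : 0 ≤ p) (hp1 : p < 1)
    (ξ : PMF ℕ) {Y : PMF ℕ} (hY : ∀ i : ℕ, Y i = ENNReal.ofReal ((1 - p) * p ^ i)) :
    pmfMean (ξ.bind fun n => Y.map fun y => min y n)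
      = ENNReal.ofReal (1 - p) * ∑' x : ℕ, ENNReal.ofReal ((x : ℝ) * p ^ x) * pmfTail ξ x
        + ENNReal.ofReal p * ∑' n : ℕ, ENNReal.ofReal ((n : ℝ) * p ^ n) * ξ n := by
  rw [pmfMean_bind_map_min, tsum_mul_pmfTail, ← ENNReal.tsum_mul_left, ← ENNReal.tsum_mul_left,
    ← ENNReal.tsum_add]
  refine tsum_congr fun n => ?_
  simp_rw [pmfTail_of_geometric hp0 hp1 hY]
  rw [← ENNReal.ofReal_sum_of_nonneg fun k _ => by positivity,
    ← ENNReal.ofReal_sum_of_nonneg fun k _ => by positivity, sum_range_pow_succ_eq,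
    ENNReal.ofReal_add (mul_nonneg (by linarith) (sum_nonneg fun x _ => by positivity))
      (by positivity), ENNReal.ofReal_mul (by linarith), ENNReal.ofReal_mul hp0]
  ring

lemma toReal_tsum_ofReal_mul {w : ℕ → ℝ} (hw : ∀ n, 0 ≤ w n) {a : ℕ → ℝ≥0∞}
    (ha : ∀ n, a n ≠ ⊤) :
    (∑' n, ENNReal.ofReal (w n) * a n).toReal = ∑' n, w n * (a n).toReal := by
  rw [ENNReal.tsum_toReal_eq fun n => ENNReal.mul_ne_top ENNReal.ofReal_ne_top (ha n)]
  simp_rw [ENNReal.toReal_mul, ENNReal.toReal_ofReal (hw _)]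

theorem mae_survival_general (p : ℝ) (hp0 : 0 < p) (hp1 : p < 1)
    (ξ Y : PMF ℕ) (hY : ∀ i : ℕ, Y i = ENNReal.ofReal ((1 - p) * p ^ i))
    (hq01 : (ξ.bind fun n => Y.map fun y => min y n) 0
        + (ξ.bind fun n => Y.map fun y => min y n) 1 < 1) :
    0 < survivalProb (ξ.bind fun n => Y.map fun y => min y n) ↔
      (1 - p * ∑' n : ℕ, (n : ℝ) * p ^ n * (ξ n).toReal) / (1 - p)
        < ∑' x : ℕ, (x : ℝ) * p ^ x * (pmfTail ξ x).toReal := by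
  have hmean := pmfMean_bind_map_min_of_geometric hp0.le hp1 ξ hY
  have hfin := pmfMean_bind_map_min_ne_top_of_geometric hp0.le hp1 ξ hY
  obtain ⟨hR, hB⟩ := ENNReal.add_ne_top.1 (hmean ▸ hfin)
  rw [survivalProb_pos_iff _ hq01, ← ENNReal.toReal_lt_toReal ENNReal.one_ne_top hfin,
    ENNReal.toReal_one, hmean, ENNReal.toReal_add hR hB, ENNReal.toReal_mul, ENNReal.toReal_mul,
    ENNReal.toReal_ofReal (by linarith), ENNReal.toReal_ofReal hp0.le,
    toReal_tsum_ofReal_mul (fun x => by positivity) fun x => ne_top_of_le_ne_top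
      ENNReal.one_ne_top (pmfTail_le_one ξ x),
    toReal_tsum_ofReal_mul (fun n => by positivity) ξ.apply_ne_top, div_lt_iff₀ (by linarith)]
  constructor <;> intro h <;> linarith

/-- the (p,ξ)-MAE branching process (offspring `X = min(Y,ξ)` with `Y`
geometric, `P(Y=i)=(1-p)pⁱ`, independent of `ξ`) survives with positive probability iff
`Σ_{x≥1} x p^x P(ξ ≥ x) > (1 - p·E(ξ p^ξ))/(1-p)`. -/
theorem mae_survival (p : ℝ) (hp0 : 0 < p) (hp1 : p < 1)
    (ξ Y : PMF ℕ) (hY : ∀ i : ℕ, Y i = ENNReal.ofReal ((1 - p) * p ^ i))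
    (hmean : pmfMean ξ ≠ ⊤)
    (hq0 : 0 < (ξ.bind fun n => Y.map fun y => min y n) 0)
    (hq01 : (ξ.bind fun n => Y.map fun y => min y n) 0
        + (ξ.bind fun n => Y.map fun y => min y n) 1 < 1) :
    0 < survivalProb (ξ.bind fun n => Y.map fun y => min y n) ↔
      (1 - p * ∑' n : ℕ, (n : ℝ) * p ^ n * (ξ n).toReal) / (1 - p)
        < ∑' x : ℕ, (x : ℝ) * p ^ x * (pmfTail ξ x).toReal :=
  mae_survival_general p hp0 hp1 ξ Y hY hq01
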